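/- Let ρ, b, σ, c* be positive real numbers. Let w : [0,∞) → ℝ be twice continuously differentiable with w(x) > 0 and w'(x) ≥ 0 for all x ≥ 0, satisfying ρ·w(x) + (b x − (1+c*))·w'(x) − (1/2)σ² x²·w''(x) = 0 for all x ≥ 0. Let ψ : [0,∞) → ℝ be continuous and a viscosity subsolution on [0,∞) of the linearized equation ρψ + b x Dψ − (1+c*)|Dψ| − (1/2)σ² x² D²ψ = 0, and suppose that for every ε > 0 the function ψ − ε·w attains its supremum over [0,∞) at some point. Then ψ(x) ≤ 0 for all x ∈ [0,∞). -/

import Mathlib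

/-!
Test the subsolution property with `φ = ε w` at a maximum point `x₀` of `ψ - ε w`. Since
`w' ≥ 0`, the term `|Dφ|` is `ε w'`, and subtracting `ε` times the ODE for `w` cancels every
derivative term, leaving `ρ (ψ - ε w)(x₀) ≤ 0`. Hence `ψ ≤ ε w` everywhere, and `ε → 0`.
-/

open Real Set

/-- `ψ` is a viscosity subsolution on `[0,∞)` of the linearized equation
`ρψ + bx Dψ − (1+c*)|Dψ| − (1/2)σ²x² D²ψ = 0`. -/
def IsLinearizedSubsolution (ρ b σ cstar : ℝ) (ψ : ℝ → ℝ) : Prop :=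
  ∀ φ : ℝ → ℝ, ContDiff ℝ 2 φ →
    ∀ x₀ ∈ Ici (0:ℝ), IsLocalMaxOn (fun x => ψ x - φ x) (Ici 0) x₀ →
      ρ * ψ x₀ + b * x₀ * deriv φ x₀ - (1 + cstar) * |deriv φ x₀|
        - (1 / 2) * σ ^ 2 * x₀ ^ 2 * deriv (deriv φ) x₀ ≤ 0

open Filter Topology

theorem nonpos_of_forall_pos_le_mul {a c : ℝ} (h : ∀ ε > 0, a ≤ ε * c) : a ≤ 0 := by
  have hlim : Tendsto (fun ε : ℝ => ε * c) (𝓝[>] 0) (𝓝 0) := by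
    refine (Continuous.tendsto' ?_ 0 0 (zero_mul c)).mono_left nhdsWithin_le_nhds
    fun_prop
  exact ge_of_tendsto hlim (eventually_nhdsWithin_of_forall h)

theorem IsLinearizedSubsolution.le_mul_of_isLocalMaxOn {ρ b σ cstar ε x₀ : ℝ} {ψ w : ℝ → ℝ}
    (hψ : IsLinearizedSubsolution ρ b σ cstar ψ) (hρ : 0 < ρ) (hw : ContDiff ℝ 2 w)
    (hε : 0 ≤ ε) (hx₀ : 0 ≤ x₀) (hw' : 0 ≤ deriv w x₀)
    (hode : ρ * w x₀ + (b * x₀ - (1 + cstar)) * deriv w x₀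
      - (1 / 2) * σ ^ 2 * x₀ ^ 2 * deriv (deriv w) x₀ = 0)
    (hmax : IsLocalMaxOn (fun x => ψ x - ε * w x) (Ici 0) x₀) :
    ψ x₀ ≤ ε * w x₀ := by
  have htest := hψ (fun y => ε * w y) (contDiff_const.mul hw) x₀ hx₀ hmax
  simp only [deriv_const_mul_field', abs_mul, abs_of_nonneg hε, abs_of_nonneg hw'] at htest
  have h : ρ * (ψ x₀ - ε * w x₀) ≤ 0 := by linear_combination htest - ε * hode
  linarith [nonpos_of_mul_nonpos_right h hρ]

theorem linearized_subsolution_nonpos_general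
    (ρ b σ cstar : ℝ) (hρ : 0 < ρ)
    (w : ℝ → ℝ) (hw : ContDiff ℝ 2 w)
    (hw_incr : ∀ x ∈ Ici (0:ℝ), 0 ≤ deriv w x)
    (hw_ode : ∀ x ∈ Ici (0:ℝ),
      ρ * w x + (b * x - (1 + cstar)) * deriv w x
        - (1 / 2) * σ ^ 2 * x ^ 2 * deriv (deriv w) x = 0)
    (ψ : ℝ → ℝ)
    (hψ_sub : IsLinearizedSubsolution ρ b σ cstar ψ)
    (hmax : ∀ ε > (0:ℝ), ∃ x₀ ∈ Ici (0:ℝ),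
      IsMaxOn (fun x => ψ x - ε * w x) (Ici 0) x₀) :
    ∀ x ∈ Ici (0:ℝ), ψ x ≤ 0 := by
  intro x hx
  refine nonpos_of_forall_pos_le_mul (c := w x) fun ε hε => ?_
  obtain ⟨x₀, hx₀, hmax₀⟩ := hmax ε hε
  have htouch : ψ x₀ ≤ ε * w x₀ := hψ_sub.le_mul_of_isLocalMaxOn hρ hw hε.le hx₀
    (hw_incr x₀ hx₀) (hw_ode x₀ hx₀) hmax₀.localize
  have hle : ψ x - ε * w x ≤ ψ x₀ - ε * w x₀ := hmax₀ hx
  linarith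

/-- The final step of the comparison proof: a subsolution of the linearized equation that can
be touched from above by `ε w` for every `ε > 0` is nonpositive. -/
theorem linearized_subsolution_nonpos
    (ρ b σ cstar : ℝ) (hρ : 0 < ρ) (hb : 0 < b) (hσ : 0 < σ) (hcstar : 0 < cstar)
    (w : ℝ → ℝ) (hw : ContDiff ℝ 2 w)
    (hw_pos : ∀ x ∈ Ici (0:ℝ), 0 < w x)
    (hw_incr : ∀ x ∈ Ici (0:ℝ), 0 ≤ deriv w x)
    (hw_ode : ∀ x ∈ Ici (0:ℝ),
      ρ * w x + (b * x - (1 + cstar)) * deriv w x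
        - (1 / 2) * σ ^ 2 * x ^ 2 * deriv (deriv w) x = 0)
    (ψ : ℝ → ℝ) (hψ_cont : ContinuousOn ψ (Ici 0))
    (hψ_sub : IsLinearizedSubsolution ρ b σ cstar ψ)
    (hmax : ∀ ε > (0:ℝ), ∃ x₀ ∈ Ici (0:ℝ),
      IsMaxOn (fun x => ψ x - ε * w x) (Ici 0) x₀) :
    ∀ x ∈ Ici (0:ℝ), ψ x ≤ 0 :=
  linearized_subsolution_nonpos_general ρ b σ cstar hρ w hw hw_incr hw_ode ψ hψ_sub hmax
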